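/- A finite simple graph is chordal (every cycle of length at least 4 has a chord) if and only if it can be built inductively by starting from a single vertex and, at each step, adding one new vertex together with edges joining it to all vertices of some (possibly empty) clique of the current graph. -/

import Mathlib

/-- A simple graph is chordal if every cycle of length at least 4 has a chord,
i.e. an edge of the graph joining two vertices of the cycle which is not an edge
of the cycle itself. -/
def SimpleGraph.IsChordal {V : Type*} (G : SimpleGraph V) : Prop :=
  ∀ (v : V) (c : G.Walk v v), c.IsCycle → 4 ≤ c.length →
    ∃ u w : V, u ∈ c.support ∧ w ∈ c.support ∧ G.Adj u w ∧ s(u, w) ∉ c.edges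

/-!
If the earlier neighbours of every vertex form a clique, then on any cycle the latest vertex has
two earlier neighbours on the cycle; they are adjacent, and on a cycle of length at least 4 that
edge is a chord.

Conversely, by Dirac's lemma every chordal graph is complete or has two non-adjacent simplicial
vertices; deleting a simplicial vertex and recursing lists the vertices in reverse order of the
construction. To prove Dirac's lemma for non-adjacent `v` and `u`, let `C` be the component of `u`
once `v` and its neighbours are deleted, and `S` the neighbours of `v` adjacent to `C`. Two
non-adjacent vertices of `S` would be joined by a shortest path through `C`, which together with
`v` is a chordless cycle of length at least 4. So `S` is a clique, and Dirac's lemma for the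
smaller graph on `C ∪ S` yields a simplicial vertex in `C`; all its neighbours lie in `C ∪ S`,
so it is simplicial in the whole graph.
-/

namespace SimpleGraph

variable {V W : Type*} {G : SimpleGraph V}

namespace Walk

theorem mem_edges_of_isSubwalk_of_length_eq_one {u v x y : V} {p : G.Walk u v}
    {q : G.Walk x y} (hq : q.length = 1) (h : q.IsSubwalk p) : s(x, y) ∈ p.edges := by
  cases q with
  | nil => simp at hq
  | cons hxz q' =>
    cases q' with
    | nil => exact h.edges_subset (by simp)
    | cons _ _ => simp at hq

theorem isChordless_of_length_eq_dist {u v : V} (p : G.Walk u v) (hp : p.length = G.dist u v) :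
    p.IsChordless := by
  classical
  have key {a b : V} (q : G.Walk a b) (hq : q.IsSubwalk p) (hab : G.Adj a b) :
      s(a, b) ∈ p.edges :=
    mem_edges_of_isSubwalk_of_length_eq_one
      ((length_eq_dist_of_subwalk hp hq).trans (dist_eq_one_iff_adj.mpr hab)) hq
  rw [isChordless_iff_forall_mem_edges]
  intro x y hx hy hxy
  rw [← p.take_spec hx, mem_support_append_iff] at hy
  rcases hy with hy | hy
  · rw [Sym2.eq_swap]
    exact key _ (((p.takeUntil x hx).isSubwalk_dropUntil hy).trans (p.isSubwalk_takeUntil hx))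
      hxy.symm
  · exact key _ (((p.dropUntil x hx).isSubwalk_takeUntil hy).trans (p.isSubwalk_dropUntil hx)) hxy

theorem IsChordless.map {G' : SimpleGraph W} (f : G ↪g G') {u v : V} {p : G.Walk u v}
    (hp : p.IsChordless) : (p.map f.toHom).IsChordless := by
  rw [isChordless_iff_forall_mem_edges] at hp ⊢
  simp only [support_map, edges_map, List.mem_map]
  rintro _ _ ⟨x, hx, rfl⟩ ⟨y, hy, rfl⟩ hxy
  exact ⟨s(x, y), hp hx hy (f.map_adj_iff.mp hxy), rfl⟩

theorem exists_isPath_isChordless_of_forall_support {P : V → Prop} {u v : V} (q : G.Walk u v)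
    (hq : ∀ z ∈ q.support, P z) :
    ∃ p : G.Walk u v, p.IsPath ∧ p.IsChordless ∧ ∀ z ∈ p.support, P z := by
  obtain ⟨p, hp⟩ := (q.induce {z | P z} hq).reachable.exists_walk_length_eq_dist
  refine ⟨p.map (Embedding.induce _).toHom, (p.isPath_of_length_eq_dist hp).map
    Subtype.val_injective, (p.isChordless_of_length_eq_dist hp).map _, fun z hz => ?_⟩
  -- the endpoints of the mapped walk are `u` and `v` only up to defeq, so `support_map` is
  -- applied through `congrArg` rather than `rw`
  obtain ⟨z, -, rfl⟩ := List.mem_map.mp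
    ((congrArg (z ∈ ·) (support_map (Embedding.induce _).toHom p)).mp hz)
  exact z.2

end Walk

open Walk

theorem isChordal_of_forall_isClique {α : Type*} [LinearOrder α] (r : V → α) (hr : r.Injective)
    (h : ∀ v, G.IsClique {w | G.Adj v w ∧ r w < r v}) : G.IsChordal := by
  classical
  intro v₀ c hc hlen
  obtain ⟨v, hv, hmax⟩ := c.support.toFinset.exists_max_image r ⟨v₀, by simp⟩
  rw [List.mem_toFinset] at hv
  set d := c.rotate v hv
  have hd : d.IsCycle := hc.rotate hv
  have hdlen : 4 ≤ d.length := by simpa [d] using hlen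
  have hmem {z : V} (hz : z ∈ d.support) : z ∈ c.support := (mem_support_rotate_iff c v hv).mp hz
  have hlt {z : V} (hz : z ∈ d.support) (hzv : z ≠ v) : r z < r v :=
    (hmax z (List.mem_toFinset.mpr (hmem hz))).lt_of_ne (hr.ne hzv)
  have hx := d.getVert_mem_support 1
  have hy := d.getVert_mem_support (d.length - 1)
  have hvx : G.Adj v d.snd := d.adj_snd hd.not_nil
  have hvy : G.Adj v d.penultimate := (d.adj_penultimate hd.not_nil).symm
  refine ⟨d.snd, d.penultimate, hmem hx, hmem hy,
    h v ⟨hvx, hlt hx hvx.ne.symm⟩ ⟨hvy, hlt hy hvy.ne.symm⟩ hd.snd_ne_penultimate, fun he => ?_⟩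
  have hde : d.edges = s(v, d.snd) :: d.tail.edges :=
    (congrArg edges (d.cons_tail_eq hd.not_nil)).symm
  rw [← (c.rotate_edges v hv).perm.mem_iff, hde, List.mem_cons] at he
  rcases he with he | he
  · rcases Sym2.eq_iff.mp he with ⟨h', -⟩ | ⟨-, h'⟩
    exacts [hvx.ne h'.symm, hvy.ne h'.symm]
  · -- then `d.penultimate` follows `d.snd` on the path `d.tail`, so `d` is a triangle
    have h2 := hd.isPath_tail.eq_snd_of_mem_edges he
    have := hd.getVert_injOn (by simp; omega) (by simp; omega) (h2.trans (d.getVert_tail (n := 1)))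
    omega

theorem IsChordal.adj_of_walk_outside_neighborSet (hG : G.IsChordal) {v a b : V}
    (ha : G.Adj v a) (hb : G.Adj v b) (hab : a ≠ b) (q : G.Walk a b)
    (hq : ∀ z ∈ q.support, z = a ∨ z = b ∨ z ≠ v ∧ ¬ G.Adj v z) : G.Adj a b := by
  obtain ⟨p, hp, hpc, hv⟩ := q.exists_isPath_isChordless_of_forall_support hq
  by_contra hnadj
  have hvp : v ∉ p.support := fun h => by
    rcases hv v h with rfl | rfl | h
    exacts [ha.ne rfl, hb.ne rfl, h.1 rfl]
  have hlen : 2 ≤ p.length := by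
    by_contra! h
    interval_cases hl : p.length
    exacts [hab (eq_of_length_eq_zero hl), hnadj (adj_of_length_eq_one hl)]
  set c := cons ha (p.concat hb.symm)
  have hc : c.IsCycle := by
    refine (cons_isCycle_iff _ _).mpr ⟨hp.concat hvp hb.symm, ?_⟩
    rw [edges_concat, List.concat_eq_append, List.mem_append, List.mem_singleton, not_or]
    refine ⟨fun h => hvp (p.fst_mem_support_of_mem_edges h), fun h => ?_⟩
    rcases Sym2.eq_iff.mp h with ⟨rfl, -⟩ | ⟨-, rfl⟩
    exacts [hb.ne rfl, hab rfl]
  obtain ⟨x, y, hx, hy, hxy, hne⟩ := hG v c hc (by simp [c]; omega)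
  simp only [c, support_cons, support_concat, edges_cons, edges_concat, List.concat_eq_append,
    List.mem_cons, List.mem_append, List.not_mem_nil, not_or, or_false] at hx hy hne
  -- a chord at `v` would end at `a` or `b`; a chord between vertices of `p` is an edge of `p`
  grind [hpc.mem_edges, hxy.ne, hxy.symm, Sym2.eq_swap]

/-- Simpliciality in the subgraph induced on `s`. Induced subgraphs are kept as vertex sets, so
that only the chordality of `G` itself is ever used. -/
abbrev IsSimplicialIn (G : SimpleGraph V) (s : Set V) (v : V) : Prop :=
  G.IsClique (G.neighborSet v ∩ s)

theorem exists_isSimplicialIn_of_isClique_union {C S : Set V} (hS : G.IsClique S)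
    (hC : C.Nonempty) (h : G.IsClique (C ∪ S) ∨ ∃ x ∈ C ∪ S, ∃ y ∈ C ∪ S, x ≠ y ∧ ¬ G.Adj x y ∧
      G.IsSimplicialIn (C ∪ S) x ∧ G.IsSimplicialIn (C ∪ S) y) :
    ∃ x ∈ C, G.IsSimplicialIn (C ∪ S) x := by
  rcases h with h | ⟨x, hx, y, hy, hxy, hnxy, hxs, hys⟩
  · obtain ⟨u, hu⟩ := hC
    exact ⟨u, hu, h.subset Set.inter_subset_right⟩
  by_contra! hno
  have hxS : x ∈ S := hx.resolve_left fun h => hno x h hxs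
  have hyS : y ∈ S := hy.resolve_left fun h => hno y h hys
  exact hnxy (hS hxS hyS hxy)

theorem IsChordal.exists_isSimplicialIn_of_not_adj (hG : G.IsChordal) {s : Set V}
    (ih : ∀ t ⊂ s, G.IsClique t ∨ ∃ x ∈ t, ∃ y ∈ t, x ≠ y ∧ ¬ G.Adj x y ∧
      G.IsSimplicialIn t x ∧ G.IsSimplicialIn t y)
    {v u : V} (hv : v ∈ s) (hu : u ∈ s) (huv : u ≠ v) (hvu : ¬ G.Adj v u) :
    ∃ x ∈ s, x ≠ v ∧ ¬ G.Adj v x ∧ G.IsSimplicialIn s x := by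
  set D : Set V := {z | z ∈ s ∧ z ≠ v ∧ ¬ G.Adj v z}
  set C : Set V := {z | ∃ p : G.Walk u z, ∀ y ∈ p.support, y ∈ D}
  set S : Set V := {y | y ∈ s ∧ G.Adj v y ∧ ∃ c ∈ C, G.Adj c y}
  have hCD : C ⊆ D := fun z ⟨p, hp⟩ => hp z p.end_mem_support
  have huC : u ∈ C := ⟨nil, by simp [D, hu, huv, hvu]⟩
  have hCnbr : ∀ c ∈ C, ∀ y ∈ s, G.Adj c y → y ∈ C ∪ S := by
    rintro c ⟨p, hp⟩ y hy hcy
    by_cases hvy : G.Adj v y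
    · exact .inr ⟨hy, hvy, c, ⟨p, hp⟩, hcy⟩
    · refine .inl ⟨p.concat hcy, fun z hz => ?_⟩
      rw [support_concat, List.mem_append, List.mem_singleton] at hz
      rcases hz with hz | rfl
      · exact hp z hz
      · refine ⟨hy, ?_, hvy⟩
        rintro rfl
        exact (hp c p.end_mem_support).2.2 hcy.symm
  have hS : G.IsClique S := by
    rintro a ⟨-, hva, ca, ⟨pa, hpa⟩, hca⟩ b ⟨-, hvb, cb, ⟨pb, hpb⟩, hcb⟩ hab
    refine hG.adj_of_walk_outside_neighborSet hva hvb hab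
      ((cons hca.symm (pa.reverse.append pb)).concat hcb) fun z hz => ?_
    simp only [support_concat, support_cons, support_append, support_reverse,
      List.mem_append, List.mem_cons, List.mem_reverse, List.not_mem_nil, or_false] at hz
    rcases hz with (h | h | h) | h
    · exact .inl h
    · exact .inr (.inr (hpa z h).2)
    · exact .inr (.inr (hpb z (List.mem_of_mem_tail h)).2)
    · exact .inr (.inl h)
  have hWs : C ∪ S ⊂ s := by
    refine (Set.ssubset_iff_of_subset (Set.union_subset (fun z hz => (hCD hz).1)
      fun z hz => hz.1)).mpr ⟨v, hv, ?_⟩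
    rintro (hvC | hvS)
    exacts [(hCD hvC).2.1 rfl, hvS.2.1.ne rfl]
  obtain ⟨x, hxC, hx⟩ := exists_isSimplicialIn_of_isClique_union hS ⟨u, huC⟩ (ih _ hWs)
  have hsub : G.neighborSet x ∩ s ⊆ G.neighborSet x ∩ (C ∪ S) :=
    fun z hz => ⟨hz.1, hCnbr x hxC z hz.2 hz.1⟩
  exact ⟨x, (hCD hxC).1, (hCD hxC).2.1, (hCD hxC).2.2, hx.subset hsub⟩

section Finite

variable [Finite V]

theorem IsChordal.isClique_or_exists_isSimplicialIn_pair (hG : G.IsChordal) (s : Set V) :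
    G.IsClique s ∨ ∃ x ∈ s, ∃ y ∈ s, x ≠ y ∧ ¬ G.Adj x y ∧
      G.IsSimplicialIn s x ∧ G.IsSimplicialIn s y := by
  induction s using WellFoundedLT.induction with | _ s ih
  by_cases hs : G.IsClique s
  · exact .inl hs
  obtain ⟨a, ha, b, hb, hab, hnab⟩ : ∃ a ∈ s, ∃ b ∈ s, a ≠ b ∧ ¬ G.Adj a b := by
    simpa [IsClique, Set.Pairwise] using hs
  obtain ⟨x, hx, hxa, hax, hxs⟩ :=
    hG.exists_isSimplicialIn_of_not_adj ih ha hb hab.symm hnab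
  obtain ⟨y, hy, hyx, hxy, hys⟩ :=
    hG.exists_isSimplicialIn_of_not_adj ih hx ha hxa.symm fun h => hax h.symm
  exact .inr ⟨x, hx, y, hy, hyx.symm, hxy, hxs, hys⟩

theorem IsChordal.exists_isSimplicialIn (hG : G.IsChordal) {s : Set V} (hs : s.Nonempty) :
    ∃ x ∈ s, G.IsSimplicialIn s x := by
  obtain ⟨x, hx⟩ := hs
  rcases hG.isClique_or_exists_isSimplicialIn_pair s with h | ⟨y, hy, -, -, -, -, hys, -⟩
  exacts [⟨x, hx, h.subset Set.inter_subset_right⟩, ⟨y, hy, hys⟩]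

theorem IsChordal.exists_injOn_forall_isClique (hG : G.IsChordal) (s : Set V) :
    ∃ r : V → ℕ, Set.InjOn r s ∧ ∀ v ∈ s, G.IsClique ({w | G.Adj v w ∧ r w < r v} ∩ s) := by
  classical
  induction s using WellFoundedLT.induction with | _ s ih
  rcases s.eq_empty_or_nonempty with rfl | hs
  · exact ⟨0, by simp, by simp⟩
  obtain ⟨x, hx, hxs⟩ := hG.exists_isSimplicialIn hs
  obtain ⟨r, hinj, hr⟩ := ih (s \ {x}) (Set.sdiff_singleton_ssubset.mpr hx)
  obtain ⟨N, hN⟩ := (Set.finite_range r).bddAbove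
  set r' := Function.update r x (N + 1)
  have hlt {w : V} (hw : w ≠ x) : r' w < r' x := by
    simpa [r', Function.update_of_ne hw] using Nat.lt_succ_of_le (hN ⟨w, rfl⟩)
  have heq : Set.EqOn r r' (s \ {x}) := fun w hw => (Function.update_of_ne hw.2 _ _).symm
  have hinj' : Set.InjOn r' s := by
    rw [← Set.insert_eq_of_mem hx, ← Set.insert_sdiff_singleton, Set.injOn_insert (by simp)]
    exact ⟨hinj.congr heq, fun ⟨w, hw, hwx⟩ => (hlt hw.2).ne hwx⟩
  refine ⟨r', hinj', fun v hv => ?_⟩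
  by_cases hvx : v = x
  · subst hvx
    exact hxs.subset (Set.inter_subset_inter_left s fun w hw => hw.1)
  refine (hr v ⟨hv, hvx⟩).subset ?_
  rintro w ⟨⟨hvw, hw⟩, hws⟩
  have hwx : w ≠ x := by
    rintro rfl
    exact (hlt hvx).asymm hw
  rw [← heq ⟨hws, hwx⟩, ← heq ⟨hv, hvx⟩] at hw
  exact ⟨⟨hvw, hw⟩, hws, hwx⟩

end Finite

end SimpleGraph

theorem Fintype.exists_equiv_fin_lt_iff {V α : Type*} [Fintype V] [LinearOrder α] (r : V → α)
    (hr : r.Injective) : ∃ f : V ≃ Fin (Fintype.card V), ∀ a b, f a < f b ↔ r a < r b := by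
  let := LinearOrder.lift' r hr
  exact ⟨(Fintype.orderIsoFinOfCardEq V rfl).symm.toEquiv, fun a b =>
    (Fintype.orderIsoFinOfCardEq V rfl).symm.lt_iff_lt⟩

/-- The inductive construction is recorded by the order `f` in which the vertices are added: the
clique a vertex is attached to consists of its earlier neighbours. -/
theorem isChordal_iff_inductive_clique_construction_general
    {V : Type*} [Fintype V] (G : SimpleGraph V) :
    G.IsChordal ↔
      ∃ f : V ≃ Fin (Fintype.card V),
        ∀ v : V, G.IsClique {w : V | G.Adj v w ∧ f w < f v} := by
  refine ⟨fun hG => ?_, fun ⟨f, hf⟩ => G.isChordal_of_forall_isClique f f.injective hf⟩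
  obtain ⟨r, hr, hclique⟩ := hG.exists_injOn_forall_isClique Set.univ
  obtain ⟨f, hf⟩ := Fintype.exists_equiv_fin_lt_iff r (Set.injOn_univ.mp hr)
  refine ⟨f, fun v => ?_⟩
  simpa [hf] using hclique v (Set.mem_univ v)

/-- A finite simple graph is chordal iff it can be built by starting from a single
vertex and repeatedly adding a new vertex joined to all vertices of a (possibly empty)
clique of the current graph; equivalently, iff there is an enumeration of the vertices
such that the earlier neighbors of each vertex form a clique. -/
theorem isChordal_iff_inductive_clique_construction
    {V : Type*} [Fintype V] [DecidableEq V] (G : SimpleGraph V) :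
    G.IsChordal ↔
      ∃ f : V ≃ Fin (Fintype.card V),
        ∀ v : V, G.IsClique {w : V | G.Adj v w ∧ f w < f v} :=
  isChordal_iff_inductive_clique_construction_general G
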